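/- arXiv:1805.11068 — 3 statements merged into one kernel-verified Lean document; each statement's English description precedes it below -/
import Mathlib

section
/- Suppose g : ℝ → ℝ is differentiable at 1 with g'(1) ≠ 0, and m_ε : [0,1] → ℝ satisfies g(m_ε(x)) = εV(x) + g(1) − εV(x₀) for all x ∈ [0,1], where m_ε → 1 uniformly as ε → 0⁺. Then for every sufficiently small ε > 0 and all x ∈ [0,1], |m_ε(x) − 1| ≤ (2(max V − min V)/|g'(1)|) · ε. -/
open Set Filter Topology

/-
Near `1` the map `g` is injective to first order: `|g y - g 1| ≥ |g'(1)| |y - 1| / 2`.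
Uniform convergence puts every `m ε x` in that neighbourhood for small `ε`, while the identity
gives `|g (m ε x) - g 1| = ε |V x - V x₀| ≤ ε (max V - min V)`.
-/

theorem HasDerivAt.eventually_norm_mul_norm_sub_le {𝕜 F : Type*} [NontriviallyNormedField 𝕜]
    [NormedAddCommGroup F] [NormedSpace 𝕜 F] {f : 𝕜 → F} {f' : F} {a : 𝕜}
    (hf : HasDerivAt f f' a) : ∀ᶠ y in 𝓝 a, ‖f'‖ * ‖y - a‖ ≤ 2 * ‖f y - f a‖ := by
  rcases eq_or_ne f' 0 with rfl | hf'
  · exact .of_forall fun y => by simp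
  filter_upwards [hf.isLittleO.def (half_pos (norm_pos_iff.mpr hf'))] with y hy
  have hlin : ‖(y - a) • f'‖ ≤ ‖f y - f a‖ + ‖f y - f a - (y - a) • f'‖ := by
    simpa using norm_sub_le (f y - f a) (f y - f a - (y - a) • f')
  rw [norm_smul] at hlin
  linarith

theorem TendstoUniformlyOn.eventually_forall_mem {ι α β : Type*} [UniformSpace β]
    {F : ι → α → β} {c : β} {p : Filter ι} {s : Set α} {P : β → Prop}
    (hF : TendstoUniformlyOn F (fun _ => c) p s) (hP : ∀ᶠ y in 𝓝 c, P y) :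
    ∀ᶠ n in p, ∀ x ∈ s, P (F n x) :=
  eventually_prod_principal_iff.mp (tendsto_prod_principal_iff.mpr hF hP)

theorem stmt_6 (g : ℝ → ℝ) (hg : DifferentiableAt ℝ g 1) (hg' : deriv g 1 ≠ 0)
    (V : ℝ → ℝ) (hV : ContinuousOn V (Set.Icc 0 1))
    (x₀ : ℝ) (hx₀ : x₀ ∈ Set.Icc (0 : ℝ) 1)
    (m : ℝ → ℝ → ℝ)
    (heq : ∀ ε > (0 : ℝ), ∀ x ∈ Set.Icc (0 : ℝ) 1,
      g (m ε x) = ε * V x + g 1 - ε * V x₀)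
    (hunif : TendstoUniformlyOn (fun ε => m ε) (fun _ => 1)
      (nhdsWithin 0 (Set.Ioi 0)) (Set.Icc 0 1)) :
    ∃ ε₀ > (0 : ℝ), ∀ ε : ℝ, 0 < ε → ε < ε₀ → ∀ x ∈ Set.Icc (0 : ℝ) 1,
      |m ε x - 1| ≤ 2 * (sSup (V '' Set.Icc (0 : ℝ) 1) - sInf (V '' Set.Icc (0 : ℝ) 1))
        / |deriv g 1| * ε := by
  have hbdd : Bornology.IsBounded (V '' Icc 0 1) :=
    (isCompact_Icc.image_of_continuousOn hV).isBounded
  have hosc : ∀ x ∈ Icc (0 : ℝ) 1, |V x - V x₀| ≤ sSup (V '' Icc 0 1) - sInf (V '' Icc 0 1) :=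
    fun x hx => Real.diam_eq hbdd ▸ Metric.dist_le_diam_of_mem hbdd ⟨x, hx, rfl⟩ ⟨x₀, hx₀, rfl⟩
  have hnear := hunif.eventually_forall_mem hg.hasDerivAt.eventually_norm_mul_norm_sub_le
  obtain ⟨ε₀, hε₀, hsub⟩ := mem_nhdsGT_iff_exists_Ioo_subset.mp hnear
  refine ⟨ε₀, hε₀, fun ε hε hεε₀ x hx => ?_⟩
  have hbound : |deriv g 1| * |m ε x - 1| ≤ 2 * (ε * |V x - V x₀|) := by
    have h := hsub ⟨hε, hεε₀⟩ x hx
    rwa [heq ε hε x hx, show ε * V x + g 1 - ε * V x₀ - g 1 = ε * (V x - V x₀) by ring,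
      Real.norm_eq_abs, Real.norm_eq_abs, Real.norm_eq_abs, abs_mul, abs_of_pos hε] at h
  rw [div_mul_eq_mul_div, le_div_iff₀ (abs_pos.mpr hg'), mul_comm _ |deriv g 1|]
  nlinarith [hosc x hx]
end

section
/- Suppose u : [0,1] → ℝ is piecewise C¹ and semiconcave (every jump of u' satisfies u'(x⁻) ≥ u'(x⁺)), m is a probability density, j ≠ 0, m(x)(u'(x)+p) = j a.e., and at every x the value m(x) lies in {m⁻(x), m⁺(x)} with continuous functions m⁻, m⁺ satisfying inf_x (m⁺(x) − m⁻(x)) > 0 and m⁻ < 1 < m⁺ pointwise. If there exists a point e where m jumps from m⁺ (on the left) to m⁻ (on the right), then u' has a negative jump at e when j > 0, contradicting semiconcavity; hence no such regular solution can have such a transition point. -/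
theorem mul_one_div_sub_one_div_neg {j a b : ℝ} (hj : 0 < j) (hb : 0 < b) (hba : b < a) :
    j * (1 / a - 1 / b) < 0 :=
  mul_neg_of_pos_of_neg hj (sub_neg.mpr (one_div_lt_one_div_of_lt hb hba))

theorem stmt_12_general (j p : ℝ) (hj : 0 < j)
    (mm mp : ℝ → ℝ)
    (hmm_pos : ∀ x ∈ Set.Icc (0 : ℝ) 1, 0 < mm x)
    (hmm_lt : ∀ x ∈ Set.Icc (0 : ℝ) 1, mm x < 1)
    (hmp_gt : ∀ x ∈ Set.Icc (0 : ℝ) 1, 1 < mp x)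
    (e : ℝ) (he : e ∈ Set.Icc (0 : ℝ) 1)
    (uL uR : ℝ)
    (huL : uL = j / mp e - p)  -- left limit of u' at e: m jumps from m⁺ on the left
    (huR : uR = j / mm e - p)  -- right limit of u' at e: to m⁻ on the right
    (hsemiconcave : uR ≤ uL) :
    (uL - uR = j * (1 / mp e - 1 / mm e) ∧ uL - uR < 0) ∧ False := by
  have hjump : uL - uR = j * (1 / mp e - 1 / mm e) := by
    rw [huL, huR]
    ring
  have hneg : uL - uR < 0 := hjump ▸
    mul_one_div_sub_one_div_neg hj (hmm_pos e he) ((hmm_lt e he).trans (hmp_gt e he))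
  exact ⟨⟨hjump, hneg⟩, by linarith⟩

theorem stmt_12 (j p : ℝ) (hj : 0 < j)
    (mm mp : ℝ → ℝ) (hmm_cont : ContinuousOn mm (Set.Icc 0 1))
    (hmp_cont : ContinuousOn mp (Set.Icc 0 1))
    (hmm_pos : ∀ x ∈ Set.Icc (0 : ℝ) 1, 0 < mm x)
    (hmm_lt : ∀ x ∈ Set.Icc (0 : ℝ) 1, mm x < 1)
    (hmp_gt : ∀ x ∈ Set.Icc (0 : ℝ) 1, 1 < mp x)
    (hgap : ∃ δ > (0 : ℝ), ∀ x ∈ Set.Icc (0 : ℝ) 1, δ ≤ mp x - mm x)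
    (e : ℝ) (he : e ∈ Set.Icc (0 : ℝ) 1)
    (uL uR : ℝ)
    (huL : uL = j / mp e - p)  -- left limit of u' at e: m jumps from m⁺ on the left
    (huR : uR = j / mm e - p)  -- right limit of u' at e: to m⁻ on the right
    (hsemiconcave : uR ≤ uL) :
    (uL - uR = j * (1 / mp e - 1 / mm e) ∧ uL - uR < 0) ∧ False :=
  stmt_12_general j p hj mm mp hmm_pos hmm_lt hmp_gt e he uL uR huL huR hsemiconcave
end

section
/- Suppose u : [0,1] → ℝ is Lipschitz, p ∈ ℝ, m is a probability density with ∫₀¹ m = 1, the equation (u'+p)²/2 + εV = g(m) + H̄ holds a.e., m·(u'+p) = 0 a.e., and H̄ = ε∫₀¹ V − ∫₀¹ g(m(x)) dx. Then u' + p = 0 almost everywhere; and if additionally u is 1-periodic (u(0) = u(1)), then p = 0 and u is constant. -/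
open Set MeasureTheory intervalIntegral

/-!
Integrating the Hamilton–Jacobi equation over `[0, 1]` and inserting the value of `H` shows that
the nonnegative kinetic term `(u' + p)² / 2` has integral zero, hence vanishes a.e. A Lipschitz
function is absolutely continuous, so the fundamental theorem of calculus turns `u' = -p` a.e.
into `u x = u 0 - p x`; periodicity then forces `p = 0`.
-/

theorem ae_eq_zero_of_sq_ae_eq_of_integral_eq_zero {α : Type*} [MeasurableSpace α]
    {μ : Measure α} {f h : α → ℝ} (hfh : ∀ᵐ x ∂μ, f x ^ 2 = h x) (hh : Integrable h μ)
    (h0 : ∫ x, h x ∂μ = 0) : ∀ᵐ x ∂μ, f x = 0 := by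
  have h_nonneg : 0 ≤ᵐ[μ] h := hfh.mono fun x hx => hx ▸ sq_nonneg (f x)
  have h_ae_zero : h =ᵐ[μ] 0 := (integral_eq_zero_iff_of_nonneg_ae h_nonneg hh).mp h0
  filter_upwards [hfh, h_ae_zero] with x hx hx0
  exact pow_eq_zero_iff two_ne_zero |>.mp (hx.trans hx0)

theorem LipschitzOnWith.eq_add_mul_sub_of_ae_deriv_eq {f : ℝ → ℝ} {K : NNReal} {a b c : ℝ}
    (hf : LipschitzOnWith K f (Icc a b))
    (hc : ∀ᵐ x ∂volume.restrict (Icc a b), deriv f x = c) :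
    ∀ x ∈ Icc a b, f x = f a + c * (x - a) := by
  intro x hx
  have hfx : LipschitzOnWith K f (uIcc a x) :=
    hf.mono (uIcc_of_le hx.1 ▸ Icc_subset_Icc_right hx.2)
  have hc' : ∀ᵐ t, t ∈ uIoc a x → deriv f t = c := by
    filter_upwards [(ae_restrict_iff' measurableSet_Icc).mp hc] with t ht htx
    rw [uIoc_of_le hx.1] at htx
    exact ht ⟨htx.1.le, htx.2.trans hx.2⟩
  have hftc := hfx.absolutelyContinuousOnInterval.integral_deriv_eq_sub
  rw [integral_congr_ae hc', intervalIntegral.integral_const, smul_eq_mul] at hftc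
  linarith

theorem stmt_18_general (ε : ℝ)
    (V : ℝ → ℝ) (hV : ContinuousOn V (Set.Icc 0 1))
    (g : ℝ → ℝ)
    (p H : ℝ) (u m : ℝ → ℝ) (L : NNReal)
    (hu : LipschitzOnWith L u (Set.Icc 0 1))
    (heq : ∀ᵐ x ∂(MeasureTheory.volume.restrict (Set.Icc (0 : ℝ) 1)),
      (deriv u x + p) ^ 2 / 2 + ε * V x = g (m x) + H)
    (hgm_int : IntervalIntegrable (fun x => g (m x)) MeasureTheory.volume 0 1)
    (hH : H = ε * (∫ x in (0 : ℝ)..1, V x) - ∫ x in (0 : ℝ)..1, g (m x)) :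
    (∀ᵐ x ∂(MeasureTheory.volume.restrict (Set.Icc (0 : ℝ) 1)), deriv u x + p = 0) ∧
    (u 0 = u 1 → p = 0 ∧ ∀ x ∈ Set.Icc (0 : ℝ) 1, u x = u 0) := by
  have hV_int : IntervalIntegrable V volume 0 1 :=
    hV.intervalIntegrable_of_Icc zero_le_one
  have hresidual_int : IntervalIntegrable (fun x => 2 * (g (m x) + H - ε * V x)) volume 0 1 :=
    ((hgm_int.add intervalIntegrable_const).sub (hV_int.const_mul ε)).const_mul 2
  have hresidual_zero : ∫ x in (0 : ℝ)..1, 2 * (g (m x) + H - ε * V x) = 0 := by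
    rw [intervalIntegral.integral_const_mul,
      integral_sub (hgm_int.add intervalIntegrable_const) (hV_int.const_mul ε),
      integral_add hgm_int intervalIntegrable_const, intervalIntegral.integral_const,
      intervalIntegral.integral_const_mul, hH]
    simp
  have hderiv : ∀ᵐ x ∂volume.restrict (Icc (0 : ℝ) 1), deriv u x + p = 0 := by
    refine ae_eq_zero_of_sq_ae_eq_of_integral_eq_zero (heq.mono fun x hx => by linarith)
      ((intervalIntegrable_iff_integrableOn_Icc_of_le zero_le_one).mp hresidual_int) ?_
    rwa [integral_Icc_eq_integral_Ioc, ← integral_of_le zero_le_one]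
  refine ⟨hderiv, fun hper => ?_⟩
  have haffine := hu.eq_add_mul_sub_of_ae_deriv_eq (c := -p)
    (hderiv.mono fun x hx => eq_neg_of_add_eq_zero_left hx)
  have hp : p = 0 := by
    have := haffine 1 ⟨zero_le_one, le_rfl⟩
    linarith
  exact ⟨hp, fun x hx => by simpa [hp] using haffine x hx⟩

theorem stmt_18 (ε : ℝ) (hε : 0 ≤ ε)
    (V : ℝ → ℝ) (hV : ContinuousOn V (Set.Icc 0 1))
    (g : ℝ → ℝ) (hg : Continuous g)
    (p H : ℝ) (u m : ℝ → ℝ) (L : NNReal)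
    (hu : LipschitzOnWith L u (Set.Icc 0 1))
    (heq : ∀ᵐ x ∂(MeasureTheory.volume.restrict (Set.Icc (0 : ℝ) 1)),
      (deriv u x + p) ^ 2 / 2 + ε * V x = g (m x) + H)
    (hm0 : ∀ᵐ x ∂(MeasureTheory.volume.restrict (Set.Icc (0 : ℝ) 1)),
      m x * (deriv u x + p) = 0)
    (hm_nonneg : ∀ x ∈ Set.Icc (0 : ℝ) 1, 0 ≤ m x)
    (hm_one : (∫ x in (0 : ℝ)..1, m x) = 1)
    (hgm_int : IntervalIntegrable (fun x => g (m x)) MeasureTheory.volume 0 1)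
    (hH : H = ε * (∫ x in (0 : ℝ)..1, V x) - ∫ x in (0 : ℝ)..1, g (m x)) :
    (∀ᵐ x ∂(MeasureTheory.volume.restrict (Set.Icc (0 : ℝ) 1)), deriv u x + p = 0) ∧
    (u 0 = u 1 → p = 0 ∧ ∀ x ∈ Set.Icc (0 : ℝ) 1, u x = u 0) :=
  stmt_18_general ε V hV g p H u m L hu heq hgm_int hH
end
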